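/- arXiv:1603.08044 — 2 statements merged into one kernel-verified Lean document; each statement's English description precedes it below -/
import Mathlib

section
/- Assume char F = 2 and let f be a derivation of N. Then there exist: (1) a block upper triangular matrix X (an n×n matrix with X r s = 0 whenever b r > b s); (2) an F-linear map φ : N → N whose image is contained in N^{1t} and which vanishes on every N^{ij} with j > i+1; (3) a derivation φ₁ of N with φ₁(N^{12}) ⊆ N^{2t}, φ₁(N^{ij}) = 0 for every (i,j) ≠ (1,2), and φ₁ = 0 unless block 1 consists of a single index; (4) a derivation φ₂ of N with φ₂(N^{t−1,t}) ⊆ N^{1,t−1}, φ₂(N^{ij}) = 0 for every (i,j) ≠ (t−1,t), and φ₂ = 0 unless block t consists of a single index; (5) a derivation ψ₁ of N with ψ₁(N^{12}) ⊆ N^{3t}, ψ₁(N^{13}) ⊆ N^{2t}, ψ₁(N^{ij}) = 0 for every (i,j) ∉ {(1,2),(1,3)}, and ψ₁ = 0 unless block 1 consists of a single index; (6) a derivation ψ₂ of N with ψ₂(N^{t−1,t}) ⊆ N^{1,t−2}, ψ₂(N^{t−2,t}) ⊆ N^{1,t−1}, ψ₂(N^{ij}) = 0 for every (i,j) ∉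 {(t−1,t),(t−2,t)}, and ψ₂ = 0 unless block t consists of a single index; such that f(A) = X·A − A·X + φ(A) + φ₁(A) + φ₂(A) + ψ₁(A) + ψ₂(A) for all A ∈ N. -/
/-- `A` is a strictly block upper triangular matrix relative to the block function `b`
(index `r` lies in block `b r`): `A r s = 0` whenever `b r ≥ b s`. -/
def InN {F : Type*} [Field F] {n : ℕ} (b : Fin n → ℕ)
    (A : Matrix (Fin n) (Fin n) F) : Prop :=
  ∀ r s, b s ≤ b r → A r s = 0

/-- `A` lies in the `(i,j)` block `N^{ij}`: `A r s = 0` unless `b r = i` and `b s = j`. -/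
def InBlk {F : Type*} [Field F] {n : ℕ} (b : Fin n → ℕ) (i j : ℕ)
    (A : Matrix (Fin n) (Fin n) F) : Prop :=
  ∀ r s, ¬(b r = i ∧ b s = j) → A r s = 0

/-- `f` is a derivation of the Lie algebra `N` of strictly block upper triangular matrices:
it maps `N` into `N` and satisfies `f [X,Y] = [f X, Y] + [X, f Y]` on `N`,
where `[X,Y] = XY - YX`. -/
def IsDerN {F : Type*} [Field F] {n : ℕ} (b : Fin n → ℕ)
    (f : Matrix (Fin n) (Fin n) F →ₗ[F] Matrix (Fin n) (Fin n) F) : Prop :=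
  (∀ A, InN b A → InN b (f A)) ∧
  ∀ X Y, InN b X → InN b Y →
    f (X * Y - Y * X) = (f X * Y - Y * f X) + (X * f Y - f Y * X)

/-!
Write `E r s = single r s 1`. Comparing entries in the derivation identity for two matrix units
shows that for `E r s` in a superdiagonal block `N^{i,i+1}`, the row `r` and the column `s` of
`f (E r s)` are those of `[X, E r s]` for one block upper triangular `X` read off from such entries
(`adMatrix`), while every other entry vanishes except in the corner `N^{1t}`, in `N^{2t}`, `N^{3t}`
when `i = 1`, and in `N^{1,t-1}`, `N^{1,t-2}` when `i + 1 = t`. The matching block projections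
`φ, φ₁, ψ₁, φ₂, ψ₂` of `f` (of `f - ad X` for the corner) are derivations of `N`, by block
identities obtained by projecting the derivation identity onto one block row or column. Hence `f`
and `ad X + φ + φ₁ + φ₂ + ψ₁ + ψ₂` are derivations that agree on the superdiagonal blocks, which
generate `N`. Finally, a second index `u ≠ r` in block 1 makes `f (E r s)` vanish below row `r`
outside column `s`, which forces `φ₁ = ψ₁ = 0`; symmetrically for block `t`.
-/

open Matrix

section

variable {F : Type*} [Field F] {n : ℕ} {b : Fin n → ℕ}

section BlockAlgebra

variable (b) in
def blockProj (i j : ℕ) : Matrix (Fin n) (Fin n) F →ₗ[F] Matrix (Fin n) (Fin n) F where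
  toFun M := of fun r s => if b r = i ∧ b s = j then M r s else 0
  map_add' M N := by ext r s; by_cases h : b r = i ∧ b s = j <;> simp [h]
  map_smul' c M := by ext r s; by_cases h : b r = i ∧ b s = j <;> simp [h]

variable (b) in
def superdiagProj : Matrix (Fin n) (Fin n) F →ₗ[F] Matrix (Fin n) (Fin n) F where
  toFun M := of fun r s => if b s = b r + 1 then M r s else 0
  map_add' M N := by ext r s; by_cases h : b s = b r + 1 <;> simp [h]
  map_smul' c M := by ext r s; by_cases h : b s = b r + 1 <;> simp [h]

@[simp]
lemma blockProj_apply (i j : ℕ) (M : Matrix (Fin n) (Fin n) F) (r s : Fin n) :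
    blockProj b i j M r s = if b r = i ∧ b s = j then M r s else 0 := rfl

@[simp]
lemma superdiagProj_apply (M : Matrix (Fin n) (Fin n) F) (r s : Fin n) :
    superdiagProj b M r s = if b s = b r + 1 then M r s else 0 := rfl

variable {i j k l : ℕ} {A B M X Y : Matrix (Fin n) (Fin n) F}

lemma inBlk_blockProj (i j : ℕ) (M : Matrix (Fin n) (Fin n) F) :
    InBlk b i j (blockProj b i j M) :=
  fun r s h => by simp [h]

lemma InBlk.inN (hA : InBlk b i j A) (hij : i < j) : InN b A :=
  fun r s h => hA r s (by omega)

lemma InBlk.blockProj_eq_zero (hA : InBlk b i j A) (h : ¬(k = i ∧ l = j)) :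
    blockProj b k l A = 0 := by
  ext r s
  simp only [blockProj_apply, Matrix.zero_apply]
  split_ifs with h'
  · exact hA r s (by omega)
  · rfl

lemma InBlk.superdiagProj_eq_zero (hA : InBlk b i j A) (h : j ≠ i + 1) :
    superdiagProj b A = 0 := by
  ext r s
  simp only [superdiagProj_apply, Matrix.zero_apply]
  split_ifs with h'
  · exact hA r s (by omega)
  · rfl

lemma InN.mul_apply_eq_zero (hX : InN b X) (hY : InN b Y) {r s : Fin n}
    (h : b s ≤ b r + 1) : (X * Y) r s = 0 := by
  rw [mul_apply]
  refine Finset.sum_eq_zero fun u _ => ?_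
  by_cases hu : b u ≤ b r
  · rw [hX r u hu, zero_mul]
  · rw [hY u s (by omega), mul_zero]

lemma InN.superdiagProj_mul (hX : InN b X) (hY : InN b Y) : superdiagProj b (X * Y) = 0 := by
  ext r s
  simp only [superdiagProj_apply, Matrix.zero_apply]
  split_ifs with h
  · exact hX.mul_apply_eq_zero hY (by omega)
  · rfl

lemma InN.blockProj_mul (hX : InN b X) (hY : InN b Y) (h : l ≤ k + 1) :
    blockProj b k l (X * Y) = 0 := by
  ext r s
  simp only [blockProj_apply, Matrix.zero_apply]
  split_ifs with h'
  · exact hX.mul_apply_eq_zero hY (by omega)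
  · rfl

lemma InBlk.mul_eq_zero (hA : InBlk b i j A) (hB : InBlk b k l B) (h : j ≠ k) :
    A * B = 0 := by
  ext r s
  rw [mul_apply, Matrix.zero_apply]
  refine Finset.sum_eq_zero fun u _ => ?_
  by_cases hu : b u = j
  · rw [hB u s (by omega), mul_zero]
  · rw [hA r u (by omega), zero_mul]

lemma InBlk.mul_inN_eq_zero (hA : InBlk b i j A) (hY : InN b Y) (hj : ∀ r, b r ≤ j) :
    A * Y = 0 := by
  ext r s
  rw [mul_apply, Matrix.zero_apply]
  refine Finset.sum_eq_zero fun u _ => ?_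
  by_cases hu : b u = j
  · rw [hY u s (by have := hj s; omega), mul_zero]
  · rw [hA r u (by omega), zero_mul]

lemma InBlk.inN_mul_eq_zero (hA : InBlk b i j A) (hY : InN b Y) (hi : ∀ r, i ≤ b r) :
    Y * A = 0 := by
  ext r s
  rw [mul_apply, Matrix.zero_apply]
  refine Finset.sum_eq_zero fun u _ => ?_
  by_cases hu : b u = i
  · rw [hY r u (by have := hi r; omega), zero_mul]
  · rw [hA u s (by omega), mul_zero]

lemma InBlk.blockProj_mul_left (hA : InBlk b i j A) (M : Matrix (Fin n) (Fin n) F) (l : ℕ) :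
    blockProj b i l (A * M) = A * blockProj b j l M := by
  ext r s
  simp only [blockProj_apply, mul_apply]
  split_ifs with h
  · refine Finset.sum_congr rfl fun u _ => ?_
    by_cases hu : b u = j
    · simp [hu, h.2]
    · rw [hA r u (by omega), zero_mul, zero_mul]
  · refine (Finset.sum_eq_zero fun u _ => ?_).symm
    by_cases hru : b r = i ∧ b u = j
    · simp [hru.2, show b s ≠ l by tauto]
    · rw [hA r u hru, zero_mul]

lemma InBlk.blockProj_mul_right (hA : InBlk b i j A) (M : Matrix (Fin n) (Fin n) F) (k : ℕ) :
    blockProj b k j (M * A) = blockProj b k i M * A := by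
  ext r s
  simp only [blockProj_apply, mul_apply]
  split_ifs with h
  · refine Finset.sum_congr rfl fun u _ => ?_
    by_cases hu : b u = i
    · simp [hu, h.1]
    · rw [hA u s (by omega), mul_zero, mul_zero]
  · refine (Finset.sum_eq_zero fun u _ => ?_).symm
    by_cases hus : b u = i ∧ b s = j
    · simp [hus.1, show b r ≠ k by tauto]
    · rw [hA u s hus, mul_zero]

lemma InBlk.blockProj_mul_left_of_ne (hA : InBlk b i j A) (M : Matrix (Fin n) (Fin n) F)
    (h : k ≠ i) : blockProj b k l (A * M) = 0 := by
  ext r s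
  simp only [blockProj_apply, Matrix.zero_apply, mul_apply]
  split_ifs with h'
  · exact Finset.sum_eq_zero fun u _ => by rw [hA r u (by omega), zero_mul]
  · rfl

lemma InBlk.blockProj_mul_right_of_ne (hA : InBlk b i j A) (M : Matrix (Fin n) (Fin n) F)
    (h : l ≠ j) : blockProj b k l (M * A) = 0 := by
  ext r s
  simp only [blockProj_apply, Matrix.zero_apply, mul_apply]
  split_ifs with h'
  · exact Finset.sum_eq_zero fun u _ => by rw [hA u s (by omega), mul_zero]
  · rfl

lemma InBlk.blockProj_inN_mul (hA : InBlk b i j A) (hM : InN b M) (h : i ≤ k) :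
    blockProj b k l (M * A) = 0 := by
  ext r s
  simp only [blockProj_apply, Matrix.zero_apply, mul_apply]
  split_ifs with h'
  · refine Finset.sum_eq_zero fun u _ => ?_
    by_cases hu : b u = i
    · rw [hM r u (by omega), zero_mul]
    · rw [hA u s (by omega), mul_zero]
  · rfl

lemma InBlk.blockProj_mul_inN (hA : InBlk b i j A) (hM : InN b M) (h : l ≤ j) :
    blockProj b k l (A * M) = 0 := by
  ext r s
  simp only [blockProj_apply, Matrix.zero_apply, mul_apply]
  split_ifs with h'
  · refine Finset.sum_eq_zero fun u _ => ?_
    by_cases hu : b u = j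
    · rw [hM u s (by omega), mul_zero]
    · rw [hA r u (by omega), zero_mul]
  · rfl

lemma InN.blockProj_mul_succ (hX : InN b X) (hY : InN b Y) (hij : j = i + 1)
    (hjk : k = j + 1) :
    blockProj b i k (X * Y) = blockProj b i j X * blockProj b j k Y := by
  ext r s
  simp only [blockProj_apply, mul_apply]
  split_ifs with h
  · refine Finset.sum_congr rfl fun u _ => ?_
    by_cases hu : b u = j
    · simp [hu, h]
    · by_cases hur : b u ≤ b r
      · simp [hX r u hur]
      · simp [hY u s (by omega), hu]
  · refine (Finset.sum_eq_zero fun u _ => ?_).symm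
    split_ifs <;> simp_all

lemma mul_congr_of_inBlk_left {W Y' : Matrix (Fin n) (Fin n) F} (hW : InBlk b j l W)
    (h : ∀ r u, b u = j → Y r u = Y' r u) : Y * W = Y' * W := by
  ext r s
  simp only [mul_apply]
  refine Finset.sum_congr rfl fun u _ => ?_
  by_cases hu : b u = j
  · rw [h r u hu]
  · rw [hW u s (by omega), mul_zero, mul_zero]

lemma mul_congr_of_inBlk_right {W Y' : Matrix (Fin n) (Fin n) F} (hW : InBlk b k j W)
    (h : ∀ u s, b u = j → Y u s = Y' u s) : W * Y = W * Y' := by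
  ext r s
  simp only [mul_apply]
  refine Finset.sum_congr rfl fun u _ => ?_
  by_cases hu : b u = j
  · rw [h u s hu]
  · rw [hW r u (by omega), zero_mul, zero_mul]

lemma InN.add (hX : InN b X) (hY : InN b Y) : InN b (X + Y) :=
  fun r s h => by rw [Matrix.add_apply, hX r s h, hY r s h, add_zero]

lemma inN_blockProj_of_lt (h : i < j) (M : Matrix (Fin n) (Fin n) F) : InN b (blockProj b i j M) :=
  (inBlk_blockProj i j M).inN h

lemma InN.inN_blockProj (hM : InN b M) (i j : ℕ) : InN b (blockProj b i j M) :=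
  fun r s h => by simp [hM r s h]

lemma InN.mul_of_inBlk_two (hY : InN b Y) (hlb : ∀ r, 1 ≤ b r) {W : Matrix (Fin n) (Fin n) F}
    (hW : InBlk b 2 l W) : Y * W = blockProj b 1 2 Y * W :=
  mul_congr_of_inBlk_left hW fun r u hu => by
    rw [blockProj_apply]
    split_ifs with h
    · rfl
    · exact hY r u (by have := hlb r; omega)

lemma InN.mul_of_inBlk_three (hY : InN b Y) (hlb : ∀ r, 1 ≤ b r) {W : Matrix (Fin n) (Fin n) F}
    (hW : InBlk b 3 l W) : Y * W = (blockProj b 1 3 Y + blockProj b 2 3 Y) * W :=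
  mul_congr_of_inBlk_left hW fun r u hu => by
    rw [Matrix.add_apply, blockProj_apply, blockProj_apply]
    split_ifs with h₁ h₂ h₂
    · omega
    · rw [add_zero]
    · rw [zero_add]
    · rw [add_zero]
      exact hY r u (by have := hlb r; omega)

lemma InN.inBlk_mul_of_pred (hY : InN b Y) {t : ℕ} (hub : ∀ r, b r ≤ t)
    {W : Matrix (Fin n) (Fin n) F} (hW : InBlk b k (t - 1) W) :
    W * Y = W * blockProj b (t - 1) t Y :=
  mul_congr_of_inBlk_right hW fun u s hu => by
    rw [blockProj_apply]
    split_ifs with h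
    · rfl
    · exact hY u s (by have := hub s; omega)

lemma InN.inBlk_mul_of_pred_pred (hY : InN b Y) {t : ℕ} (ht : 2 ≤ t) (hub : ∀ r, b r ≤ t)
    {W : Matrix (Fin n) (Fin n) F} (hW : InBlk b k (t - 2) W) :
    W * Y = W * (blockProj b (t - 2) (t - 1) Y + blockProj b (t - 2) t Y) :=
  mul_congr_of_inBlk_right hW fun u s hu => by
    rw [Matrix.add_apply, blockProj_apply, blockProj_apply]
    split_ifs with h₁ h₂ h₂
    · omega
    · rw [add_zero]
    · rw [zero_add]
    · rw [add_zero]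
      exact hY u s (by have := hub s; omega)

lemma LinearMap.map_eq_zero_of_map_single
    (g : Matrix (Fin n) (Fin n) F →ₗ[F] Matrix (Fin n) (Fin n) F)
    (h : ∀ r s, A r s ≠ 0 → g (Matrix.single r s 1) = 0) : g A = 0 := by
  rw [matrix_eq_sum_single A, map_sum]
  refine Finset.sum_eq_zero fun r _ => ?_
  rw [map_sum]
  refine Finset.sum_eq_zero fun s _ => ?_
  by_cases hrs : A r s = 0
  · rw [hrs, single_zero, map_zero]
  · rw [← mul_one (A r s), ← smul_eq_mul, ← smul_single, map_smul, h r s hrs, smul_zero]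

end BlockAlgebra

section MatrixUnits

lemma single_inBlk (r s : Fin n) : InBlk b (b r) (b s) (single r s (1 : F)) := by
  intro p q h
  rw [single_apply, if_neg]
  rintro ⟨rfl, rfl⟩
  exact h ⟨rfl, rfl⟩

lemma single_inN {r s : Fin n} (h : b r < b s) : InN b (single r s (1 : F)) :=
  (single_inBlk r s).inN h

lemma mul_single_one_apply (M : Matrix (Fin n) (Fin n) F) (u v p q : Fin n) :
    (M * single u v (1 : F)) p q = if q = v then M p u else 0 := by
  split_ifs with h
  · subst h; simp
  · exact mul_single_apply_of_ne _ _ _ _ _ h _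

lemma single_one_mul_apply (M : Matrix (Fin n) (Fin n) F) (u v p q : Fin n) :
    (single u v (1 : F) * M) p q = if p = u then M v q else 0 := by
  split_ifs with h
  · subst h; simp
  · exact single_mul_apply_of_ne _ _ _ _ _ h _

lemma single_one_mul_single_one (r s u v : Fin n) :
    single r s (1 : F) * single u v 1 = if s = u then single r v 1 else 0 := by
  split_ifs with h
  · subst h; simp
  · exact single_mul_single_of_ne _ _ _ _ h _

lemma single_one_mul_single_one_same (r v s : Fin n) :
    single r v (1 : F) * single v s 1 = single r s 1 := by
  rw [single_mul_single_same, mul_one]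

lemma blockProj_single (i j : ℕ) (r s : Fin n) :
    blockProj b i j (single r s (1 : F)) = if b r = i ∧ b s = j then single r s 1 else 0 := by
  split_ifs with h
  · ext p q
    by_cases hpq : r = p ∧ s = q
    · obtain ⟨rfl, rfl⟩ := hpq
      simp [h]
    · simp [single_apply_of_ne _ _ _ _ _ hpq]
  · exact (single_inBlk r s).blockProj_eq_zero (by omega)

lemma superdiagProj_single {r s : Fin n} (h : b s = b r + 1) :
    superdiagProj b (single r s (1 : F)) = single r s 1 := by
  ext p q
  by_cases hpq : r = p ∧ s = q
  · obtain ⟨rfl, rfl⟩ := hpq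
    simp [h]
  · simp [single_apply_of_ne _ _ _ _ _ hpq]

end MatrixUnits

section Leibniz

variable (b) in
def LeibnizOnN (g : Matrix (Fin n) (Fin n) F →ₗ[F] Matrix (Fin n) (Fin n) F) : Prop :=
  ∀ X Y, InN b X → InN b Y → g (X * Y - Y * X) = (g X * Y - Y * g X) + (X * g Y - g Y * X)

variable {g h : Matrix (Fin n) (Fin n) F →ₗ[F] Matrix (Fin n) (Fin n) F}

lemma IsDerN.leibnizOnN (hg : IsDerN b g) : LeibnizOnN b g := hg.2

lemma LeibnizOnN.add (hg : LeibnizOnN b g) (hh : LeibnizOnN b h) : LeibnizOnN b (g + h) :=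
  fun X Y hX hY => by
    simp only [LinearMap.add_apply, hg X Y hX hY, hh X Y hX hY]
    noncomm_ring

lemma LeibnizOnN.sub (hg : LeibnizOnN b g) (hh : LeibnizOnN b h) : LeibnizOnN b (g - h) :=
  fun X Y hX hY => by
    simp only [LinearMap.sub_apply, hg X Y hX hY, hh X Y hX hY]
    noncomm_ring

variable (F) in
def matrixAd (X : Matrix (Fin n) (Fin n) F) :
    Matrix (Fin n) (Fin n) F →ₗ[F] Matrix (Fin n) (Fin n) F :=
  LinearMap.mulLeft F X - LinearMap.mulRight F X

@[simp]
lemma matrixAd_apply (X A : Matrix (Fin n) (Fin n) F) : matrixAd F X A = X * A - A * X := rfl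

lemma leibnizOnN_matrixAd (X : Matrix (Fin n) (Fin n) F) : LeibnizOnN b (matrixAd F X) :=
  fun A B _ _ => by
    simp only [matrixAd_apply]
    noncomm_ring

lemma leibnizOnN_of_map_mul_eq_zero (hmul : ∀ X Y, InN b X → InN b Y → g (X * Y) = 0)
    (hann : ∀ X Y, InN b X → InN b Y → g X * Y = 0 ∧ Y * g X = 0) : LeibnizOnN b g :=
  fun X Y hX hY => by
    rw [map_sub, hmul X Y hX hY, hmul Y X hY hX, (hann X Y hX hY).1, (hann X Y hX hY).2,
      (hann Y X hY hX).1, (hann Y X hY hX).2]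
    simp

/-- The superdiagonal units generate: `E r s = [E r u, E u s]` whenever `b r < b u < b s`. -/
lemma LeibnizOnN.map_single_eq_zero (hg : LeibnizOnN b g)
    (hconv : ∀ k r s, b r < k → k < b s → ∃ u, b u = k)
    (h : ∀ r s, b s = b r + 1 → g (single r s 1) = 0) {r s : Fin n} (hrs : b r < b s) :
    g (single r s 1) = 0 := by
  obtain ⟨d, hd⟩ : ∃ d, b s = b r + 1 + d := ⟨b s - b r - 1, by omega⟩
  induction d generalizing r s with
  | zero => exact h r s hd
  | succ d ih =>
    obtain ⟨u, hu⟩ := hconv (b r + 1) r s (by omega) (by omega)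
    have hsr : s ≠ r := fun e => by subst e; omega
    have hbracket :
        single r s (1 : F) = single r u 1 * single u s 1 - single u s 1 * single r u 1 := by
      rw [single_one_mul_single_one_same, single_mul_single_of_ne _ _ _ _ hsr, sub_zero]
    rw [hbracket, hg _ _ (single_inN (by omega)) (single_inN (by omega)), h r u hu,
      ih (by omega) (by omega)]
    simp

lemma LeibnizOnN.eqOn_inN_of_superdiag (hg : LeibnizOnN b g) (hh : LeibnizOnN b h)
    (hconv : ∀ k r s, b r < k → k < b s → ∃ u, b u = k)
    (heq : ∀ r s, b s = b r + 1 → g (single r s 1) = h (single r s 1))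
    {A : Matrix (Fin n) (Fin n) F} (hA : InN b A) : g A = h A := by
  rw [← sub_eq_zero, ← LinearMap.sub_apply]
  refine LinearMap.map_eq_zero_of_map_single _ fun r s hrs => ?_
  refine (hg.sub hh).map_single_eq_zero hconv (fun r s hrs => ?_) ?_
  · rw [LinearMap.sub_apply, heq r s hrs, sub_self]
  · by_contra hle
    exact hrs (hA r s (by omega))

end Leibniz

section DerivationIdentities

variable {f : Matrix (Fin n) (Fin n) F →ₗ[F] Matrix (Fin n) (Fin n) F}
  {i j k : ℕ} {A B C : Matrix (Fin n) (Fin n) F}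

lemma IsDerN.mul_blockProj_comm (hf : IsDerN b f) (hA : InBlk b i j A) (hB : InBlk b i k B)
    (hij : i < j) (hik : i < k) (l : ℕ) :
    A * blockProj b j l (f B) = B * blockProj b k l (f A) := by
  have H := congrArg (blockProj b i l) (hf.2 A B (hA.inN hij) (hB.inN hik))
  rw [hA.mul_eq_zero hB (by omega), hB.mul_eq_zero hA (by omega), sub_zero, map_zero, map_zero,
    map_add, map_sub, map_sub, hB.blockProj_inN_mul (hf.1 A (hA.inN hij)) le_rfl,
    hA.blockProj_inN_mul (hf.1 B (hB.inN hik)) le_rfl, hA.blockProj_mul_left,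
    hB.blockProj_mul_left] at H
  rw [← sub_eq_zero, H]
  abel

lemma IsDerN.blockProj_mul_comm (hf : IsDerN b f) (hA : InBlk b i k A) (hB : InBlk b j k B)
    (hik : i < k) (hjk : j < k) (l : ℕ) :
    blockProj b l j (f A) * B = blockProj b l i (f B) * A := by
  have H := congrArg (blockProj b l k) (hf.2 A B (hA.inN hik) (hB.inN hjk))
  rw [hA.mul_eq_zero hB (by omega), hB.mul_eq_zero hA (by omega), sub_zero, map_zero, map_zero,
    map_add, map_sub, map_sub, hB.blockProj_mul_inN (hf.1 A (hA.inN hik)) le_rfl,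
    hA.blockProj_mul_inN (hf.1 B (hB.inN hjk)) le_rfl, hA.blockProj_mul_right,
    hB.blockProj_mul_right] at H
  rw [← sub_eq_zero, H]
  abel

lemma IsDerN.blockProj_map_mul_left (hf : IsDerN b f) (hA : InBlk b i j A) (hC : InBlk b j k C)
    (hij : i < j) (hjk : j < k) (l : ℕ) :
    blockProj b j l (f (A * C)) = -(C * blockProj b k l (f A)) := by
  have H := congrArg (blockProj b j l) (hf.2 A C (hA.inN hij) (hC.inN hjk))
  rw [hC.mul_eq_zero hA (by omega), sub_zero, map_add, map_sub, map_sub,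
    hC.blockProj_inN_mul (hf.1 A (hA.inN hij)) le_rfl, hC.blockProj_mul_left,
    hA.blockProj_mul_left_of_ne _ (by omega),
    hA.blockProj_inN_mul (hf.1 C (hC.inN hjk)) hij.le] at H
  rw [H]
  abel

lemma IsDerN.blockProj_map_mul_right (hf : IsDerN b f) (hC : InBlk b i j C) (hA : InBlk b j k A)
    (hij : i < j) (hjk : j < k) (l : ℕ) :
    blockProj b l j (f (C * A)) = -(blockProj b l i (f A) * C) := by
  have H := congrArg (blockProj b l j) (hf.2 C A (hC.inN hij) (hA.inN hjk))
  rw [hA.mul_eq_zero hC (by omega), sub_zero, map_add, map_sub, map_sub,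
    hA.blockProj_mul_right_of_ne _ (by omega), hA.blockProj_mul_inN (hf.1 C (hC.inN hij)) hjk.le,
    hC.blockProj_mul_inN (hf.1 A (hA.inN hjk)) le_rfl, hC.blockProj_mul_right] at H
  rw [H]
  abel

end DerivationIdentities

section Coefficients

variable {f : Matrix (Fin n) (Fin n) F →ₗ[F] Matrix (Fin n) (Fin n) F}
  {p q r s u v : Fin n}

lemma IsDerN.map_single_apply_eq_zero (hf : IsDerN b f) (hrs : b r < b s) (hpq : b q ≤ b p) :
    f (single r s 1) p q = 0 :=
  hf.1 _ (single_inN hrs) p q hpq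

lemma IsDerN.leibniz_single_apply (hf : IsDerN b f) (hrs : b r < b s) (huv : b u < b v)
    (p q : Fin n) :
    (if s = u then f (single r v 1) p q else 0) - (if v = r then f (single u s 1) p q else 0)
      = ((if q = v then f (single r s 1) p u else 0) - (if p = u then f (single r s 1) v q else 0))
        + ((if p = r then f (single u v 1) s q else 0)
          - (if q = s then f (single u v 1) p r else 0)) := by
  simpa only [single_one_mul_single_one, map_sub, apply_ite f, map_zero, Matrix.sub_apply,
    Matrix.add_apply, apply_ite (fun M : Matrix (Fin n) (Fin n) F => M p q), Matrix.zero_apply,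
    mul_single_one_apply, single_one_mul_apply] using
    congrFun₂ (hf.2 _ _ (single_inN hrs) (single_inN huv)) p q

lemma IsDerN.map_single_apply_of_lt_row (hf : IsDerN b f) (hrs : b r < b s) (hup : b u < b p)
    (hur : u ≠ r) (hus : u ≠ s) (hpr : p ≠ r) (q : Fin n) :
    f (single r s 1) p q = -(if q = s then f (single u p 1) u r else 0) := by
  have H := hf.leibniz_single_apply hrs hup u q
  rw [if_neg hus.symm, if_neg hpr, if_pos rfl, hf.map_single_apply_eq_zero hrs le_rfl,
    if_neg hur, ite_self] at H
  linear_combination H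

lemma IsDerN.map_single_apply_of_lt_col (hf : IsDerN b f) (hrs : b r < b s) (hqv : b q < b v)
    (hvr : v ≠ r) (hvs : v ≠ s) (hsq : s ≠ q) (p : Fin n) :
    f (single r s 1) p q = -(if p = r then f (single q v 1) s v else 0) := by
  have H := hf.leibniz_single_apply hrs hqv p v
  rw [if_neg hsq, if_neg hvr, if_pos rfl, if_neg hvs, hf.map_single_apply_eq_zero hrs le_rfl,
    ite_self] at H
  linear_combination -H

lemma IsDerN.map_single_apply_diag_add (hf : IsDerN b f) (hrs : b r < b s) (hsv : b s < b v) :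
    f (single r v 1) r v = f (single r s 1) r s + f (single s v 1) s v := by
  have H := hf.leibniz_single_apply hrs hsv r v
  rw [if_pos rfl, if_pos rfl, if_pos rfl, if_neg (fun h => by subst h; omega),
    if_neg (fun h => by subst h; omega), if_neg (fun h => by subst h; omega)] at H
  linear_combination H

lemma IsDerN.map_single_apply_col_trans (hf : IsDerN b f) (hrs : b r < b s) (hsv : b s < b v)
    (hpr : p ≠ r) (hps : p ≠ s) :
    f (single r s 1) p s = f (single r v 1) p v := by
  have H := hf.leibniz_single_apply hrs hsv p v
  rw [if_pos rfl, if_pos rfl, if_neg (fun h => by subst h; omega), if_neg hps, if_neg hpr,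
    if_neg (fun h => by subst h; omega)] at H
  linear_combination -H

lemma IsDerN.map_single_apply_row_trans (hf : IsDerN b f) (hur : b u < b r) (hrs : b r < b s)
    (hqs : q ≠ s) (hqr : q ≠ r) :
    f (single u s 1) u q = f (single r s 1) r q := by
  have H := hf.leibniz_single_apply hur hrs u q
  rw [if_pos rfl, if_neg (fun h => by subst h; omega), if_neg hqs, if_pos rfl,
    if_neg (fun h => by subst h; omega), if_neg hqr] at H
  linear_combination H

end Coefficients

section InnerPart

variable {t : ℕ} {w : ℕ → Fin n} {f : Matrix (Fin n) (Fin n) F →ₗ[F] Matrix (Fin n) (Fin n) F}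
  {p q r s : Fin n}

variable (b t) in
/-- The matrix `X` of the theorem; `w k` is an index in block `k`. Off the diagonal, `X p q` is
read off column `w (b q + 1)` of `f (E q (w (b q + 1)))`, or, for `q` in the last block, off row
`w (b p - 1)` of `f (E (w (b p - 1)) p)`. The diagonal is normalised so that
`X r r - X s s = f (E r s) r s`. -/
def adMatrix (w : ℕ → Fin n) (f : Matrix (Fin n) (Fin n) F →ₗ[F] Matrix (Fin n) (Fin n) F) :
    Matrix (Fin n) (Fin n) F :=
  of fun p q =>
    if p = q then
      if b p < t then f (single p (w t) 1) p (w t)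
      else f (single (w 1) (w t) 1) (w 1) (w t) - f (single (w 1) p 1) (w 1) p
    else if b q < b p then 0
    else if b q < t then f (single q (w (b q + 1)) 1) p (w (b q + 1))
    else if 2 ≤ b p then -f (single (w (b p - 1)) p 1) (w (b p - 1)) q
    else 0

lemma adMatrix_apply_of_lt (h : b q < b p) : adMatrix b t w f p q = 0 := by
  have hpq : p ≠ q := by rintro rfl; omega
  simp [adMatrix, hpq, h]

lemma adMatrix_apply_of_lt_top (hpq : p ≠ q) (hle : b p ≤ b q) (hqt : b q < t) :
    adMatrix b t w f p q = f (single q (w (b q + 1)) 1) p (w (b q + 1)) := by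
  simp [adMatrix, hpq, hle, hqt]

lemma adMatrix_apply_of_top (hpq : p ≠ q) (hle : b p ≤ b q) (hqt : t ≤ b q) (hp : 2 ≤ b p) :
    adMatrix b t w f p q = -f (single (w (b p - 1)) p 1) (w (b p - 1)) q := by
  simp [adMatrix, hpq, hp, show ¬b q < b p by omega, show ¬b q < t by omega]

lemma adMatrix_apply_self_of_lt_top (hp : b p < t) :
    adMatrix b t w f p p = f (single p (w t) 1) p (w t) := by
  simp [adMatrix, hp]

lemma adMatrix_apply_self_of_top (hp : t ≤ b p) :
    adMatrix b t w f p p = f (single (w 1) (w t) 1) (w 1) (w t) - f (single (w 1) p 1) (w 1) p := by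
  simp [adMatrix, hp]

lemma IsDerN.map_single_apply_row (hf : IsDerN b f) (hlb : ∀ r, 1 ≤ b r) (hub : ∀ r, b r ≤ t)
    (hw : ∀ k, 1 ≤ k → k ≤ t → b (w k) = k) (hadj : b s = b r + 1) (hqs : q ≠ s)
    (hrq : b r < b q) (hex : ¬(b r = 1 ∧ b q = t)) :
    f (single r s 1) r q = -adMatrix b t w f s q := by
  have hr := hlb r
  have hq := hub q
  by_cases hqt : b q < t
  · have hv := hw (b q + 1) (by omega) (by omega)
    rw [adMatrix_apply_of_lt_top hqs.symm (by omega) hqt, hf.map_single_apply_of_lt_col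
      (by omega) (by omega : b q < b (w (b q + 1))) (fun h => by rw [h] at hv; omega)
      (fun h => by rw [h] at hv; omega) hqs.symm, if_pos rfl]
  · have hu := hw (b r - 1) (by omega) (by omega)
    have hr' := hw (b r) (by omega) (by omega)
    rw [adMatrix_apply_of_top hqs.symm (by omega) (by omega) (by omega), neg_neg,
      show b s - 1 = b r by omega,
      ← hf.map_single_apply_row_trans (by omega : b (w (b r - 1)) < b (w (b r))) (by omega) hqs
        (fun h => by subst h; omega),
      hf.map_single_apply_row_trans (by omega : b (w (b r - 1)) < b r) (by omega) hqs
        (fun h => by subst h; omega)]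

lemma IsDerN.map_single_apply_col (hf : IsDerN b f) (hlb : ∀ r, 1 ≤ b r) (hub : ∀ r, b r ≤ t)
    (hw : ∀ k, 1 ≤ k → k ≤ t → b (w k) = k) (hadj : b s = b r + 1) (hpr : p ≠ r)
    (hps : b p < b s) (hex : ¬(b p = 1 ∧ b s = t)) :
    f (single r s 1) p s = adMatrix b t w f p r := by
  have hr := hlb r
  have hs := hub s
  have hs' := hw (b r + 1) (by omega) (by omega)
  rw [adMatrix_apply_of_lt_top hpr (by omega) (by omega)]
  by_cases hp : 2 ≤ b p
  · have hu := hw (b p - 1) (by omega) (by omega)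
    rw [hf.map_single_apply_of_lt_row (u := w (b p - 1)) (by omega) (by omega)
        (fun h => by rw [h] at hu; omega) (fun h => by rw [h] at hu; omega) hpr, if_pos rfl,
      hf.map_single_apply_of_lt_row (u := w (b p - 1)) (by omega) (by omega)
        (fun h => by rw [h] at hu; omega) (fun h => by rw [h] at hu; omega) hpr, if_pos rfl]
  · have hp1 := hlb p
    have hy := hw (b s + 1) (by omega) (by omega)
    rw [hf.map_single_apply_col_trans (r := r) (s := s) (v := w (b s + 1)) (by omega) (by omega)
        hpr (fun h => by subst h; omega),
      hf.map_single_apply_col_trans (r := r) (s := w (b r + 1)) (v := w (b s + 1)) (by omega)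
        (by omega) hpr (fun h => by subst h; omega)]

lemma IsDerN.map_single_apply_diag (hf : IsDerN b f) (ht : 3 ≤ t) (hlb : ∀ r, 1 ≤ b r)
    (hub : ∀ r, b r ≤ t) (hw : ∀ k, 1 ≤ k → k ≤ t → b (w k) = k) (hrs : b r < b s) :
    f (single r s 1) r s = adMatrix b t w f r r - adMatrix b t w f s s := by
  have h1 := hw 1 le_rfl (by omega)
  have h2 := hw 2 (by omega) (by omega)
  have ht' := hw t (by omega) le_rfl
  have hs := hub s
  rw [adMatrix_apply_self_of_lt_top (by omega)]
  by_cases hst : b s < t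
  · rw [adMatrix_apply_self_of_lt_top hst,
      hf.map_single_apply_diag_add hrs (by omega : b s < b (w t))]
    ring
  rw [adMatrix_apply_self_of_top (by omega)]
  by_cases hr : 1 < b r
  · linear_combination
      hf.map_single_apply_diag_add (by omega : b (w 1) < b r) (by omega : b r < b (w t)) -
        hf.map_single_apply_diag_add (by omega : b (w 1) < b r) hrs
  · have hr := hlb r
    linear_combination
      hf.map_single_apply_diag_add (by omega : b r < b (w 2)) (by omega : b (w 2) < b s) -
        hf.map_single_apply_diag_add (by omega : b r < b (w 2)) (by omega : b (w 2) < b (w t)) +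
        hf.map_single_apply_diag_add (by omega : b (w 1) < b (w 2)) (by omega : b (w 2) < b (w t)) -
        hf.map_single_apply_diag_add (by omega : b (w 1) < b (w 2)) (by omega : b (w 2) < b s)

/-- Off row `r` and column `s`, an entry of `f (E r s)` vanishes as soon as some block other than
`b r` and `b s` lies above its row or below its column; the remaining corners are the exceptional
ones. -/
lemma IsDerN.map_single_apply_eq_zero_of_ne (hf : IsDerN b f) (ht : 3 ≤ t) (hlb : ∀ r, 1 ≤ b r)
    (hub : ∀ r, b r ≤ t) (hw : ∀ k, 1 ≤ k → k ≤ t → b (w k) = k) (hadj : b s = b r + 1)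
    (hpr : p ≠ r) (hqs : q ≠ s) (hpq : b p < b q) (hex : ¬(b p = 1 ∧ b q = t))
    (hex₁ : ¬(b r = 1 ∧ b q = t ∧ (b p = 2 ∨ b p = 3)))
    (hex₂ : ¬(b s = t ∧ b p = 1 ∧ (b q = t - 1 ∨ b q = t - 2))) :
    f (single r s 1) p q = 0 := by
  have above : ∀ k, 1 ≤ k → k < b p → k ≠ b r → k ≠ b s → f (single r s 1) p q = 0 := by
    intro k hk1 hkp hkr hks
    have hu := hw k hk1 (by have := hub p; omega)
    rw [hf.map_single_apply_of_lt_row (r := r) (s := s) (u := w k) (p := p) (by omega)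
      (by omega) (fun h => by subst h; omega) (fun h => by subst h; omega) hpr, if_neg hqs,
      neg_zero]
  have below : ∀ k, b q < k → k ≤ t → k ≠ b r → k ≠ b s → f (single r s 1) p q = 0 := by
    intro k hqk hkt hkr hks
    have hv := hw k (by omega) hkt
    rw [hf.map_single_apply_of_lt_col (r := r) (s := s) (v := w k) (q := q) (by omega)
      (by omega) (fun h => by subst h; omega) (fun h => by subst h; omega) hqs.symm, if_neg hpr,
      neg_zero]
  have := hlb p
  have := hlb r
  have := hub q
  have := hub s
  by_cases h : 2 ≤ b p ∧ b r ≠ 1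
  · exact above 1 le_rfl (by omega) (by omega) (by omega)
  by_cases h : 4 ≤ b p
  · exact above 3 (by omega) (by omega) (by omega) (by omega)
  by_cases h : b q < t ∧ b s ≠ t
  · exact below t (by omega) le_rfl (by omega) (by omega)
  by_cases h : b q + 3 ≤ t
  · exact below (t - 2) (by omega) (by omega) (by omega) (by omega)
  omega

lemma IsDerN.map_single_apply_eq_adMatrix (hf : IsDerN b f) (ht : 3 ≤ t) (hlb : ∀ r, 1 ≤ b r)
    (hub : ∀ r, b r ≤ t) (hw : ∀ k, 1 ≤ k → k ≤ t → b (w k) = k) (hadj : b s = b r + 1)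
    (hex : ¬(b p = 1 ∧ b q = t)) (hex₁ : ¬(b r = 1 ∧ b q = t ∧ (b p = 2 ∨ b p = 3)))
    (hex₂ : ¬(b s = t ∧ b p = 1 ∧ (b q = t - 1 ∨ b q = t - 2))) :
    f (single r s 1) p q = matrixAd F (adMatrix b t w f) (single r s 1) p q := by
  rw [matrixAd_apply, Matrix.sub_apply, mul_single_one_apply, single_one_mul_apply]
  rcases le_or_gt (b q) (b p) with hqp | hpq
  · rw [hf.map_single_apply_eq_zero (by omega) hqp,
      ite_eq_right_iff.2 fun h => adMatrix_apply_of_lt (by subst h; omega),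
      ite_eq_right_iff.2 fun h => adMatrix_apply_of_lt (by subst h; omega), sub_zero]
  by_cases hqs : q = s <;> by_cases hpr : p = r
  · subst hqs hpr
    rw [if_pos rfl, if_pos rfl]
    exact hf.map_single_apply_diag ht hlb hub hw hpq
  · subst hqs
    rw [if_pos rfl, if_neg hpr, sub_zero]
    exact hf.map_single_apply_col hlb hub hw hadj hpr hpq hex
  · subst hpr
    rw [if_neg hqs, if_pos rfl, zero_sub]
    exact hf.map_single_apply_row hlb hub hw hadj hqs hpq hex
  · rw [if_neg hqs, if_neg hpr, sub_zero]
    exact hf.map_single_apply_eq_zero_of_ne ht hlb hub hw hadj hpr hqs hpq hex hex₁ hex₂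

end InnerPart

section Decomposition

variable {t : ℕ} {w : ℕ → Fin n} {f : Matrix (Fin n) (Fin n) F →ₗ[F] Matrix (Fin n) (Fin n) F}

variable (b t) in
def phiCorner (w : ℕ → Fin n) (f : Matrix (Fin n) (Fin n) F →ₗ[F] Matrix (Fin n) (Fin n) F) :
    Matrix (Fin n) (Fin n) F →ₗ[F] Matrix (Fin n) (Fin n) F :=
  blockProj b 1 t ∘ₗ (f - matrixAd F (adMatrix b t w f)) ∘ₗ superdiagProj b

variable (b t) in
def phiFirst (f : Matrix (Fin n) (Fin n) F →ₗ[F] Matrix (Fin n) (Fin n) F) :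
    Matrix (Fin n) (Fin n) F →ₗ[F] Matrix (Fin n) (Fin n) F :=
  blockProj b 2 t ∘ₗ f ∘ₗ blockProj b 1 2

variable (b t) in
def phiLast (f : Matrix (Fin n) (Fin n) F →ₗ[F] Matrix (Fin n) (Fin n) F) :
    Matrix (Fin n) (Fin n) F →ₗ[F] Matrix (Fin n) (Fin n) F :=
  blockProj b 1 (t - 1) ∘ₗ f ∘ₗ blockProj b (t - 1) t

variable (b t) in
def psiFirst (f : Matrix (Fin n) (Fin n) F →ₗ[F] Matrix (Fin n) (Fin n) F) :
    Matrix (Fin n) (Fin n) F →ₗ[F] Matrix (Fin n) (Fin n) F :=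
  blockProj b 3 t ∘ₗ f ∘ₗ blockProj b 1 2 + blockProj b 2 t ∘ₗ f ∘ₗ blockProj b 1 3

variable (b t) in
def psiLast (f : Matrix (Fin n) (Fin n) F →ₗ[F] Matrix (Fin n) (Fin n) F) :
    Matrix (Fin n) (Fin n) F →ₗ[F] Matrix (Fin n) (Fin n) F :=
  blockProj b 1 (t - 2) ∘ₗ f ∘ₗ blockProj b (t - 1) t
    + blockProj b 1 (t - 1) ∘ₗ f ∘ₗ blockProj b (t - 2) t

variable (b t) in
def decomposition (w : ℕ → Fin n)
    (f : Matrix (Fin n) (Fin n) F →ₗ[F] Matrix (Fin n) (Fin n) F) :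
    Matrix (Fin n) (Fin n) F →ₗ[F] Matrix (Fin n) (Fin n) F :=
  matrixAd F (adMatrix b t w f) + phiCorner b t w f + phiFirst b t f + phiLast b t f
    + psiFirst b t f + psiLast b t f

lemma IsDerN.map_single_eq_decomposition (hf : IsDerN b f) (ht : 3 ≤ t) (hlb : ∀ r, 1 ≤ b r)
    (hub : ∀ r, b r ≤ t) (hw : ∀ k, 1 ≤ k → k ≤ t → b (w k) = k) {r s : Fin n}
    (hadj : b s = b r + 1) :
    f (single r s 1) = decomposition b t w f (single r s 1) := by
  ext p q
  simp only [decomposition, phiCorner, phiFirst, phiLast, psiFirst, psiLast, LinearMap.add_apply,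
    LinearMap.sub_apply, LinearMap.comp_apply, superdiagProj_single hadj, blockProj_single,
    apply_ite f, map_zero, blockProj_apply, Matrix.add_apply, Matrix.sub_apply, Matrix.zero_apply,
    apply_ite (fun M : Matrix (Fin n) (Fin n) F => M p q)]
  have key := hf.map_single_apply_eq_adMatrix (p := p) (q := q) ht hlb hub hw hadj
  have ad0 : b q ≠ b s → b p ≠ b r → matrixAd F (adMatrix b t w f) (single r s 1) p q = 0 := by
    intro hqs hpr
    rw [matrixAd_apply, Matrix.sub_apply, mul_single_one_apply, single_one_mul_apply,
      if_neg (fun h => hqs (congrArg b h)), if_neg (fun h => hpr (congrArg b h)), sub_zero]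
  -- Outside the corner and the exceptional blocks, `key` applies; on the exceptional blocks
  -- other than the corner, `ad X (E r s)` vanishes.
  split_ifs <;> first
    | (exfalso; omega)
    | ring1
    | (rw [key (by omega) (by omega) (by omega)]; ring1)
    | (rw [ad0 (by omega) (by omega)]; ring1)

lemma leibnizOnN_phiCorner (hlb : ∀ r, 1 ≤ b r) (hub : ∀ r, b r ≤ t) :
    LeibnizOnN b (phiCorner b t w f) := by
  refine leibnizOnN_of_map_mul_eq_zero (fun X Y hX hY => ?_) fun X Y _ hY =>
    ⟨(inBlk_blockProj 1 t _).mul_inN_eq_zero hY hub, (inBlk_blockProj 1 t _).inN_mul_eq_zero hY hlb⟩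
  simp [phiCorner, hX.superdiagProj_mul hY]

lemma IsDerN.leibnizOnN_phiFirst (hf : IsDerN b f) (hlb : ∀ r, 1 ≤ b r) (hub : ∀ r, b r ≤ t) :
    LeibnizOnN b (phiFirst b t f) := by
  intro X Y hX hY
  have hXY : blockProj b 1 2 (X * Y - Y * X) = 0 := by
    rw [map_sub, hX.blockProj_mul hY le_rfl, hY.blockProj_mul hX le_rfl, sub_self]
  simp only [phiFirst, LinearMap.comp_apply, hXY, map_zero]
  rw [(inBlk_blockProj 2 t _).mul_inN_eq_zero hY hub,
    (inBlk_blockProj 2 t _).mul_inN_eq_zero hX hub,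
    hY.mul_of_inBlk_two hlb (inBlk_blockProj 2 t _),
    hX.mul_of_inBlk_two hlb (inBlk_blockProj 2 t _),
    hf.mul_blockProj_comm (inBlk_blockProj 1 2 X) (inBlk_blockProj 1 2 Y) one_lt_two one_lt_two]
  abel

lemma IsDerN.leibnizOnN_psiFirst (hf : IsDerN b f) (hlb : ∀ r, 1 ≤ b r) (hub : ∀ r, b r ≤ t) :
    LeibnizOnN b (psiFirst b t f) := by
  intro X Y hX hY
  have h12 : blockProj b 1 2 (X * Y - Y * X) = 0 := by
    rw [map_sub, hX.blockProj_mul hY le_rfl, hY.blockProj_mul hX le_rfl, sub_self]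
  have h13 : blockProj b 1 3 (X * Y - Y * X)
      = blockProj b 1 2 X * blockProj b 2 3 Y - blockProj b 1 2 Y * blockProj b 2 3 X := by
    rw [map_sub, hX.blockProj_mul_succ hY rfl rfl, hY.blockProj_mul_succ hX rfl rfl]
  have hprod : ∀ Z V : Matrix (Fin n) (Fin n) F,
      blockProj b 2 t (f (blockProj b 1 2 Z * blockProj b 2 3 V))
        = -(blockProj b 2 3 V * blockProj b 3 t (f (blockProj b 1 2 Z))) := fun Z V =>
    hf.blockProj_map_mul_left (inBlk_blockProj 1 2 Z) (inBlk_blockProj 2 3 V) (by norm_num)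
      (by norm_num) t
  have hcomm : ∀ Z V : Matrix (Fin n) (Fin n) F,
      blockProj b 1 2 Z * blockProj b 2 t (f (blockProj b 1 3 V))
        = blockProj b 1 3 V * blockProj b 3 t (f (blockProj b 1 2 Z)) := fun Z V =>
    hf.mul_blockProj_comm (inBlk_blockProj 1 2 Z) (inBlk_blockProj 1 3 V) (by norm_num)
      (by norm_num) t
  simp only [psiFirst, LinearMap.add_apply, LinearMap.comp_apply]
  rw [h12, h13, map_zero, map_zero, zero_add, map_sub, map_sub, hprod, hprod, add_mul, add_mul,
    mul_add, mul_add,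
    (inBlk_blockProj 3 t _).mul_inN_eq_zero hY hub, (inBlk_blockProj 2 t _).mul_inN_eq_zero hY hub,
    (inBlk_blockProj 3 t _).mul_inN_eq_zero hX hub, (inBlk_blockProj 2 t _).mul_inN_eq_zero hX hub,
    hY.mul_of_inBlk_three hlb (inBlk_blockProj 3 t _),
    hX.mul_of_inBlk_three hlb (inBlk_blockProj 3 t _),
    hY.mul_of_inBlk_two hlb (inBlk_blockProj 2 t _),
    hX.mul_of_inBlk_two hlb (inBlk_blockProj 2 t _),
    hcomm X Y, hcomm Y X]
  noncomm_ring

lemma IsDerN.leibnizOnN_phiLast (hf : IsDerN b f) (ht : 3 ≤ t) (hlb : ∀ r, 1 ≤ b r)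
    (hub : ∀ r, b r ≤ t) : LeibnizOnN b (phiLast b t f) := by
  intro X Y hX hY
  have hXY : blockProj b (t - 1) t (X * Y - Y * X) = 0 := by
    rw [map_sub, hX.blockProj_mul hY (by omega), hY.blockProj_mul hX (by omega), sub_self]
  simp only [phiLast, LinearMap.comp_apply, hXY, map_zero]
  rw [(inBlk_blockProj 1 (t - 1) _).inN_mul_eq_zero hY hlb,
    (inBlk_blockProj 1 (t - 1) _).inN_mul_eq_zero hX hlb,
    hY.inBlk_mul_of_pred hub (inBlk_blockProj 1 (t - 1) _),
    hX.inBlk_mul_of_pred hub (inBlk_blockProj 1 (t - 1) _),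
    hf.blockProj_mul_comm (inBlk_blockProj (t - 1) t X) (inBlk_blockProj (t - 1) t Y) (by omega)
      (by omega)]
  abel

lemma IsDerN.leibnizOnN_psiLast (hf : IsDerN b f) (ht : 3 ≤ t) (hlb : ∀ r, 1 ≤ b r)
    (hub : ∀ r, b r ≤ t) : LeibnizOnN b (psiLast b t f) := by
  intro X Y hX hY
  have hlast : blockProj b (t - 1) t (X * Y - Y * X) = 0 := by
    rw [map_sub, hX.blockProj_mul hY (by omega), hY.blockProj_mul hX (by omega), sub_self]
  have hprev : blockProj b (t - 2) t (X * Y - Y * X)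
      = blockProj b (t - 2) (t - 1) X * blockProj b (t - 1) t Y
        - blockProj b (t - 2) (t - 1) Y * blockProj b (t - 1) t X := by
    rw [map_sub, hX.blockProj_mul_succ (j := t - 1) hY (by omega) (by omega),
      hY.blockProj_mul_succ (j := t - 1) hX (by omega) (by omega)]
  have hprod : ∀ Z V : Matrix (Fin n) (Fin n) F,
      blockProj b 1 (t - 1) (f (blockProj b (t - 2) (t - 1) Z * blockProj b (t - 1) t V))
        = -(blockProj b 1 (t - 2) (f (blockProj b (t - 1) t V)) * blockProj b (t - 2) (t - 1) Z) :=
    fun Z V => hf.blockProj_map_mul_right (inBlk_blockProj (t - 2) (t - 1) Z)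
      (inBlk_blockProj (t - 1) t V) (by omega) (by omega) 1
  have hcomm : ∀ Z V : Matrix (Fin n) (Fin n) F,
      blockProj b 1 (t - 2) (f (blockProj b (t - 1) t Z)) * blockProj b (t - 2) t V
        = blockProj b 1 (t - 1) (f (blockProj b (t - 2) t V)) * blockProj b (t - 1) t Z :=
    fun Z V => hf.blockProj_mul_comm (inBlk_blockProj (t - 1) t Z) (inBlk_blockProj (t - 2) t V)
      (by omega) (by omega) 1
  simp only [psiLast, LinearMap.add_apply, LinearMap.comp_apply]
  rw [hlast, hprev, map_zero, map_zero, zero_add, map_sub, map_sub, hprod, hprod, add_mul, add_mul,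
    mul_add, mul_add, (inBlk_blockProj 1 (t - 2) _).inN_mul_eq_zero hY hlb,
    (inBlk_blockProj 1 (t - 1) _).inN_mul_eq_zero hY hlb,
    (inBlk_blockProj 1 (t - 2) _).inN_mul_eq_zero hX hlb,
    (inBlk_blockProj 1 (t - 1) _).inN_mul_eq_zero hX hlb,
    hY.inBlk_mul_of_pred_pred (by omega) hub (inBlk_blockProj 1 (t - 2) _),
    hX.inBlk_mul_of_pred_pred (by omega) hub (inBlk_blockProj 1 (t - 2) _),
    hY.inBlk_mul_of_pred hub (inBlk_blockProj 1 (t - 1) _),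
    hX.inBlk_mul_of_pred hub (inBlk_blockProj 1 (t - 1) _), mul_add, mul_add, hcomm X Y, hcomm Y X]
  noncomm_ring

end Decomposition

section Pieces

variable {t : ℕ} {w : ℕ → Fin n} {f : Matrix (Fin n) (Fin n) F →ₗ[F] Matrix (Fin n) (Fin n) F}
  {i j : ℕ} {A : Matrix (Fin n) (Fin n) F}

lemma leibnizOnN_decomposition (hf : IsDerN b f) (ht : 3 ≤ t) (hlb : ∀ r, 1 ≤ b r)
    (hub : ∀ r, b r ≤ t) : LeibnizOnN b (decomposition b t w f) :=
  ((((leibnizOnN_matrixAd _).add (leibnizOnN_phiCorner hlb hub)).add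
    (hf.leibnizOnN_phiFirst hlb hub)).add (hf.leibnizOnN_phiLast ht hlb hub)).add
    (hf.leibnizOnN_psiFirst hlb hub) |>.add (hf.leibnizOnN_psiLast ht hlb hub)

lemma IsDerN.eq_decomposition (hf : IsDerN b f) (ht : 3 ≤ t) (hlb : ∀ r, 1 ≤ b r)
    (hub : ∀ r, b r ≤ t) (hw : ∀ k, 1 ≤ k → k ≤ t → b (w k) = k) (hA : InN b A) :
    f A = decomposition b t w f A :=
  hf.leibnizOnN.eqOn_inN_of_superdiag (leibnizOnN_decomposition hf ht hlb hub)
    (fun k r s hr hs => ⟨w k, hw k (by have := hlb r; omega) (by have := hub s; omega)⟩)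
    (fun _ _ hadj => hf.map_single_eq_decomposition ht hlb hub hw hadj) hA

lemma phiCorner_eq_zero_of_inBlk (hA : InBlk b i j A) (h : i + 1 < j) :
    phiCorner b t w f A = 0 := by
  simp [phiCorner, hA.superdiagProj_eq_zero (by omega)]

lemma phiFirst_eq_zero_of_inBlk (hA : InBlk b i j A) (h : ¬(i = 1 ∧ j = 2)) :
    phiFirst b t f A = 0 := by
  simp [phiFirst, hA.blockProj_eq_zero (by omega : ¬(1 = i ∧ 2 = j))]

lemma phiLast_eq_zero_of_inBlk (hA : InBlk b i j A) (h : ¬(i = t - 1 ∧ j = t)) :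
    phiLast b t f A = 0 := by
  simp [phiLast, hA.blockProj_eq_zero (by omega : ¬(t - 1 = i ∧ t = j))]

lemma psiFirst_eq_zero_of_inBlk (hA : InBlk b i j A) (h₂ : ¬(i = 1 ∧ j = 2))
    (h₃ : ¬(i = 1 ∧ j = 3)) : psiFirst b t f A = 0 := by
  simp [psiFirst, hA.blockProj_eq_zero (by omega : ¬(1 = i ∧ 2 = j)),
    hA.blockProj_eq_zero (by omega : ¬(1 = i ∧ 3 = j))]

lemma psiLast_eq_zero_of_inBlk (hA : InBlk b i j A) (h₁ : ¬(i = t - 1 ∧ j = t))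
    (h₂ : ¬(i = t - 2 ∧ j = t)) : psiLast b t f A = 0 := by
  simp [psiLast, hA.blockProj_eq_zero (by omega : ¬(t - 1 = i ∧ t = j)),
    hA.blockProj_eq_zero (by omega : ¬(t - 2 = i ∧ t = j))]

lemma inBlk_psiFirst_of_inBlk_one_two (hA : InBlk b 1 2 A) :
    InBlk b 3 t (psiFirst b t f A) := by
  simpa [psiFirst, hA.blockProj_eq_zero (by omega : ¬(1 = 1 ∧ 3 = 2))] using
    inBlk_blockProj 3 t (f (blockProj b 1 2 A))

lemma inBlk_psiFirst_of_inBlk_one_three (hA : InBlk b 1 3 A) :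
    InBlk b 2 t (psiFirst b t f A) := by
  simpa [psiFirst, hA.blockProj_eq_zero (by omega : ¬(1 = 1 ∧ 2 = 3))] using
    inBlk_blockProj 2 t (f (blockProj b 1 3 A))

lemma inBlk_psiLast_of_inBlk_last (ht : 2 ≤ t) (hA : InBlk b (t - 1) t A) :
    InBlk b 1 (t - 2) (psiLast b t f A) := by
  simpa [psiLast, hA.blockProj_eq_zero (by omega : ¬(t - 2 = t - 1 ∧ t = t))] using
    inBlk_blockProj 1 (t - 2) (f (blockProj b (t - 1) t A))

lemma inBlk_psiLast_of_inBlk_prev (ht : 2 ≤ t) (hA : InBlk b (t - 2) t A) :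
    InBlk b 1 (t - 1) (psiLast b t f A) := by
  simpa [psiLast, hA.blockProj_eq_zero (by omega : ¬(t - 1 = t - 2 ∧ t = t))] using
    inBlk_blockProj 1 (t - 1) (f (blockProj b (t - 2) t A))

lemma IsDerN.isDerN_phiFirst (hf : IsDerN b f) (hlb : ∀ r, 1 ≤ b r) (hub : ∀ r, b r ≤ t) :
    IsDerN b (phiFirst b t f) :=
  ⟨fun A _ => (hf.1 _ (inN_blockProj_of_lt one_lt_two A)).inN_blockProj 2 t,
    hf.leibnizOnN_phiFirst hlb hub⟩

lemma IsDerN.isDerN_phiLast (hf : IsDerN b f) (ht : 3 ≤ t) (hlb : ∀ r, 1 ≤ b r)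
    (hub : ∀ r, b r ≤ t) : IsDerN b (phiLast b t f) :=
  ⟨fun A _ => (hf.1 _ (inN_blockProj_of_lt (by omega) A)).inN_blockProj 1 (t - 1),
    hf.leibnizOnN_phiLast ht hlb hub⟩

lemma IsDerN.isDerN_psiFirst (hf : IsDerN b f) (hlb : ∀ r, 1 ≤ b r) (hub : ∀ r, b r ≤ t) :
    IsDerN b (psiFirst b t f) :=
  ⟨fun A _ => ((hf.1 _ (inN_blockProj_of_lt one_lt_two A)).inN_blockProj 3 t).add
    ((hf.1 _ (inN_blockProj_of_lt (by norm_num) A)).inN_blockProj 2 t),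
    hf.leibnizOnN_psiFirst hlb hub⟩

lemma IsDerN.isDerN_psiLast (hf : IsDerN b f) (ht : 3 ≤ t) (hlb : ∀ r, 1 ≤ b r)
    (hub : ∀ r, b r ≤ t) : IsDerN b (psiLast b t f) :=
  ⟨fun A _ => ((hf.1 _ (inN_blockProj_of_lt (by omega) A)).inN_blockProj 1 (t - 2)).add
    ((hf.1 _ (inN_blockProj_of_lt (by omega) A)).inN_blockProj 1 (t - 1)),
    hf.leibnizOnN_psiLast ht hlb hub⟩

end Pieces

section SingletonBlocks

variable {t : ℕ} {f : Matrix (Fin n) (Fin n) F →ₗ[F] Matrix (Fin n) (Fin n) F} {k l : ℕ}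
  {A : Matrix (Fin n) (Fin n) F}

lemma exists_ne_of_card_filter_ne_one {α : Type*} [Fintype α] {P : α → Prop} [DecidablePred P]
    (hP : ∃ a, P a) (hcard : (Finset.univ.filter P).card ≠ 1) (a : α) : ∃ c, P c ∧ c ≠ a := by
  obtain ⟨a₀, ha₀⟩ := hP
  have hpos : 0 < (Finset.univ.filter P).card := Finset.card_pos.2 ⟨a₀, by simpa using ha₀⟩
  obtain ⟨c, hc, hca⟩ := Finset.exists_mem_ne (by omega : 1 < (Finset.univ.filter P).card) a
  exact ⟨c, (Finset.mem_filter.1 hc).2, hca⟩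

lemma IsDerN.blockProj_map_eq_zero_of_inBlk_one_two (hf : IsDerN b f)
    (hsep : ∀ r, ∃ u, b u = 1 ∧ u ≠ r) (hA : InBlk b 1 2 A) (hk : 1 < k) (hl : l ≠ 2) :
    blockProj b k l (f A) = 0 := by
  rw [← LinearMap.comp_apply (blockProj b k l) f]
  refine LinearMap.map_eq_zero_of_map_single _ fun r s hrs => ?_
  have hr : b r = 1 ∧ b s = 2 := by_contra fun h => hrs (hA r s h)
  obtain ⟨u, hu, hur⟩ := hsep r
  ext p q
  rw [LinearMap.comp_apply, blockProj_apply, Matrix.zero_apply]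
  split_ifs with hpq
  · rw [hf.map_single_apply_of_lt_row (by omega) (by omega : b u < b p) hur
      (fun h => by subst h; omega) (fun h => by subst h; omega),
      if_neg (fun h => by subst h; omega), neg_zero]
  · rfl

lemma IsDerN.blockProj_map_eq_zero_of_inBlk_one_three (hf : IsDerN b f)
    (hsep : ∀ r, ∃ u, b u = 1 ∧ u ≠ r) {v : Fin n} (hv : b v = 2) (hA : InBlk b 1 3 A)
    (hl : l ≠ 2) : blockProj b 2 l (f A) = 0 := by
  rw [← LinearMap.comp_apply (blockProj b 2 l) f]
  refine LinearMap.map_eq_zero_of_map_single _ fun r s hrs => ?_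
  have hr : b r = 1 ∧ b s = 3 := by_contra fun h => hrs (hA r s h)
  have hrv : InBlk b 1 2 (single r v (1 : F)) := hr.1 ▸ hv ▸ single_inBlk r v
  have hvs : InBlk b 2 3 (single v s (1 : F)) := hv ▸ hr.2 ▸ single_inBlk v s
  rw [LinearMap.comp_apply, ← single_one_mul_single_one_same r v s,
    hf.blockProj_map_mul_left hrv hvs one_lt_two (by norm_num),
    hf.blockProj_map_eq_zero_of_inBlk_one_two hsep hrv (by norm_num) hl, mul_zero, neg_zero]

lemma IsDerN.blockProj_map_eq_zero_of_inBlk_last (hf : IsDerN b f)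
    (hsep : ∀ s, ∃ v, b v = t ∧ v ≠ s) (hA : InBlk b (t - 1) t A) (hk : k ≠ t - 1) (hl : l < t) :
    blockProj b k l (f A) = 0 := by
  rw [← LinearMap.comp_apply (blockProj b k l) f]
  refine LinearMap.map_eq_zero_of_map_single _ fun r s hrs => ?_
  have hr : b r = t - 1 ∧ b s = t := by_contra fun h => hrs (hA r s h)
  obtain ⟨v, hv, hvs⟩ := hsep s
  ext p q
  rw [LinearMap.comp_apply, blockProj_apply, Matrix.zero_apply]
  split_ifs with hpq
  · rw [hf.map_single_apply_of_lt_col (by omega) (by omega : b q < b v)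
      (fun h => by subst h; omega) hvs (fun h => by subst h; omega),
      if_neg (fun h => by subst h; omega), neg_zero]
  · rfl

lemma IsDerN.blockProj_map_eq_zero_of_inBlk_prev (hf : IsDerN b f) (ht : 2 ≤ t)
    (hsep : ∀ s, ∃ v, b v = t ∧ v ≠ s) {v : Fin n} (hv : b v = t - 1) (hA : InBlk b (t - 2) t A)
    (hk : k ≠ t - 1) : blockProj b k (t - 1) (f A) = 0 := by
  rw [← LinearMap.comp_apply (blockProj b k (t - 1)) f]
  refine LinearMap.map_eq_zero_of_map_single _ fun r s hrs => ?_
  have hr : b r = t - 2 ∧ b s = t := by_contra fun h => hrs (hA r s h)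
  have hrv : InBlk b (t - 2) (t - 1) (single r v (1 : F)) := hr.1 ▸ hv ▸ single_inBlk r v
  have hvs : InBlk b (t - 1) t (single v s (1 : F)) := hv ▸ hr.2 ▸ single_inBlk v s
  rw [LinearMap.comp_apply, ← single_one_mul_single_one_same r v s,
    hf.blockProj_map_mul_right hrv hvs (by omega) (by omega),
    hf.blockProj_map_eq_zero_of_inBlk_last hsep hvs hk (by omega), zero_mul, neg_zero]

lemma IsDerN.phiFirst_eq_zero (hf : IsDerN b f) (ht : 3 ≤ t) (hsep : ∀ r, ∃ u, b u = 1 ∧ u ≠ r)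
    (A : Matrix (Fin n) (Fin n) F) : phiFirst b t f A = 0 :=
  hf.blockProj_map_eq_zero_of_inBlk_one_two hsep (inBlk_blockProj 1 2 A) one_lt_two (by omega)

lemma IsDerN.psiFirst_eq_zero (hf : IsDerN b f) (ht : 3 ≤ t) (hsep : ∀ r, ∃ u, b u = 1 ∧ u ≠ r)
    {v : Fin n} (hv : b v = 2) (A : Matrix (Fin n) (Fin n) F) : psiFirst b t f A = 0 := by
  simp only [psiFirst, LinearMap.add_apply, LinearMap.comp_apply]
  rw [hf.blockProj_map_eq_zero_of_inBlk_one_two hsep (inBlk_blockProj 1 2 A) (by norm_num)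
      (by omega),
    hf.blockProj_map_eq_zero_of_inBlk_one_three hsep hv (inBlk_blockProj 1 3 A) (by omega),
    add_zero]

lemma IsDerN.phiLast_eq_zero (hf : IsDerN b f) (ht : 3 ≤ t) (hsep : ∀ s, ∃ v, b v = t ∧ v ≠ s)
    (A : Matrix (Fin n) (Fin n) F) : phiLast b t f A = 0 :=
  hf.blockProj_map_eq_zero_of_inBlk_last hsep (inBlk_blockProj (t - 1) t A) (by omega) (by omega)

lemma IsDerN.psiLast_eq_zero (hf : IsDerN b f) (ht : 3 ≤ t) (hsep : ∀ s, ∃ v, b v = t ∧ v ≠ s)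
    {v : Fin n} (hv : b v = t - 1) (A : Matrix (Fin n) (Fin n) F) : psiLast b t f A = 0 := by
  simp only [psiLast, LinearMap.add_apply, LinearMap.comp_apply]
  rw [hf.blockProj_map_eq_zero_of_inBlk_last hsep (inBlk_blockProj (t - 1) t A) (by omega)
      (by omega),
    hf.blockProj_map_eq_zero_of_inBlk_prev (by omega) hsep hv (inBlk_blockProj (t - 2) t A)
      (by omega), add_zero]

end SingletonBlocks

end

theorem stmt18_general {F : Type*} [Field F] {n t : ℕ} (b : Fin n → ℕ)
    (ht : 3 ≤ t)
    (hlb : ∀ r, 1 ≤ b r) (hub : ∀ r, b r ≤ t)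
    (hsurj : ∀ k, 1 ≤ k → k ≤ t → ∃ r, b r = k)
    (f : Matrix (Fin n) (Fin n) F →ₗ[F] Matrix (Fin n) (Fin n) F)
    (hf : IsDerN b f) :
    ∃ (X : Matrix (Fin n) (Fin n) F)
      (φ φ₁ φ₂ ψ₁ ψ₂ : Matrix (Fin n) (Fin n) F →ₗ[F] Matrix (Fin n) (Fin n) F),
      (∀ r s, b s < b r → X r s = 0) ∧
      (∀ A, InN b A → InBlk b 1 t (φ A)) ∧
      (∀ i j, i + 1 < j → ∀ A, InBlk b i j A → φ A = 0) ∧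
      IsDerN b φ₁ ∧
      (∀ A, InBlk b 1 2 A → InBlk b 2 t (φ₁ A)) ∧
      (∀ i j, 1 ≤ i → i < j → j ≤ t → ¬(i = 1 ∧ j = 2) →
        ∀ A, InBlk b i j A → φ₁ A = 0) ∧
      ((Finset.univ.filter fun r => b r = 1).card ≠ 1 →
        ∀ A, InN b A → φ₁ A = 0) ∧
      IsDerN b φ₂ ∧
      (∀ A, InBlk b (t - 1) t A → InBlk b 1 (t - 1) (φ₂ A)) ∧
      (∀ i j, 1 ≤ i → i < j → j ≤ t → ¬(i = t - 1 ∧ j = t) →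
        ∀ A, InBlk b i j A → φ₂ A = 0) ∧
      ((Finset.univ.filter fun s => b s = t).card ≠ 1 →
        ∀ A, InN b A → φ₂ A = 0) ∧
      IsDerN b ψ₁ ∧
      (∀ A, InBlk b 1 2 A → InBlk b 3 t (ψ₁ A)) ∧
      (∀ A, InBlk b 1 3 A → InBlk b 2 t (ψ₁ A)) ∧
      (∀ i j, 1 ≤ i → i < j → j ≤ t → ¬(i = 1 ∧ j = 2) → ¬(i = 1 ∧ j = 3) →
        ∀ A, InBlk b i j A → ψ₁ A = 0) ∧
      ((Finset.univ.filter fun r => b r = 1).card ≠ 1 →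
        ∀ A, InN b A → ψ₁ A = 0) ∧
      IsDerN b ψ₂ ∧
      (∀ A, InBlk b (t - 1) t A → InBlk b 1 (t - 2) (ψ₂ A)) ∧
      (∀ A, InBlk b (t - 2) t A → InBlk b 1 (t - 1) (ψ₂ A)) ∧
      (∀ i j, 1 ≤ i → i < j → j ≤ t → ¬(i = t - 1 ∧ j = t) → ¬(i = t - 2 ∧ j = t) →
        ∀ A, InBlk b i j A → ψ₂ A = 0) ∧
      ((Finset.univ.filter fun s => b s = t).card ≠ 1 →
        ∀ A, InN b A → ψ₂ A = 0) ∧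
      (∀ A, InN b A → f A = X * A - A * X + φ A + φ₁ A + φ₂ A + ψ₁ A + ψ₂ A) := by
  obtain ⟨r₀, -⟩ := hsurj 1 le_rfl (by omega)
  have : Nonempty (Fin n) := ⟨r₀⟩
  choose! w hw using hsurj
  have hw₁ := hw 1 le_rfl (by omega)
  have hw₂ := hw 2 (by omega) (by omega)
  have hwt := hw t (by omega) le_rfl
  have hwt₁ := hw (t - 1) (by omega) (by omega)
  have hsep₁ : (Finset.univ.filter fun r => b r = 1).card ≠ 1 → ∀ r, ∃ u, b u = 1 ∧ u ≠ r :=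
    exists_ne_of_card_filter_ne_one ⟨w 1, hw₁⟩
  have hsep₂ : (Finset.univ.filter fun s => b s = t).card ≠ 1 → ∀ s, ∃ v, b v = t ∧ v ≠ s :=
    exists_ne_of_card_filter_ne_one ⟨w t, hwt⟩
  exact ⟨adMatrix b t w f, phiCorner b t w f, phiFirst b t f, phiLast b t f, psiFirst b t f,
    psiLast b t f, fun _ _ => adMatrix_apply_of_lt, fun _ _ => inBlk_blockProj _ _ _,
    fun _ _ h _ hA => phiCorner_eq_zero_of_inBlk hA h, hf.isDerN_phiFirst hlb hub,
    fun _ _ => inBlk_blockProj _ _ _, fun _ _ _ _ _ h _ hA => phiFirst_eq_zero_of_inBlk hA h,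
    fun h A _ => hf.phiFirst_eq_zero ht (hsep₁ h) A, hf.isDerN_phiLast ht hlb hub,
    fun _ _ => inBlk_blockProj _ _ _, fun _ _ _ _ _ h _ hA => phiLast_eq_zero_of_inBlk hA h,
    fun h A _ => hf.phiLast_eq_zero ht (hsep₂ h) A, hf.isDerN_psiFirst hlb hub,
    fun _ => inBlk_psiFirst_of_inBlk_one_two, fun _ => inBlk_psiFirst_of_inBlk_one_three,
    fun _ _ _ _ _ h₁ h₂ _ hA => psiFirst_eq_zero_of_inBlk hA h₁ h₂,
    fun h A _ => hf.psiFirst_eq_zero ht (hsep₁ h) hw₂ A, hf.isDerN_psiLast ht hlb hub,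
    fun _ => inBlk_psiLast_of_inBlk_last (by omega),
    fun _ => inBlk_psiLast_of_inBlk_prev (by omega),
    fun _ _ _ _ _ h₁ h₂ _ hA => psiLast_eq_zero_of_inBlk hA h₁ h₂,
    fun h A _ => hf.psiLast_eq_zero ht (hsep₂ h) hwt₁ A,
    fun _ hA => hf.eq_decomposition ht hlb hub hw hA⟩

/-- Theorem for char = 2: every derivation `f` of `N` decomposes as
`f = ad X + φ + φ₁ + φ₂ + ψ₁ + ψ₂`, where `X, φ, φ₁, φ₂` are as in the char ≠ 2 case
and `ψ₁, ψ₂` are derivations supported on `N^{12} ⊕ N^{13}` (resp. `N^{t-1,t} ⊕ N^{t-2,t}`)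
with values in `N^{3t} ⊕ N^{2t}` (resp. `N^{1,t-2} ⊕ N^{1,t-1}`), vanishing unless block 1
(resp. block `t`) is a single index. -/
theorem stmt18 {F : Type*} [Field F] {n t : ℕ} (b : Fin n → ℕ)
    (hn : 1 ≤ n) (ht : 3 ≤ t) (hmono : Monotone b)
    (hlb : ∀ r, 1 ≤ b r) (hub : ∀ r, b r ≤ t)
    (hsurj : ∀ k, 1 ≤ k → k ≤ t → ∃ r, b r = k)
    (hchar : ringChar F = 2)
    (f : Matrix (Fin n) (Fin n) F →ₗ[F] Matrix (Fin n) (Fin n) F)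
    (hf : IsDerN b f) :
    ∃ (X : Matrix (Fin n) (Fin n) F)
      (φ φ₁ φ₂ ψ₁ ψ₂ : Matrix (Fin n) (Fin n) F →ₗ[F] Matrix (Fin n) (Fin n) F),
      (∀ r s, b s < b r → X r s = 0) ∧
      (∀ A, InN b A → InBlk b 1 t (φ A)) ∧
      (∀ i j, i + 1 < j → ∀ A, InBlk b i j A → φ A = 0) ∧
      IsDerN b φ₁ ∧
      (∀ A, InBlk b 1 2 A → InBlk b 2 t (φ₁ A)) ∧
      (∀ i j, 1 ≤ i → i < j → j ≤ t → ¬(i = 1 ∧ j = 2) →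
        ∀ A, InBlk b i j A → φ₁ A = 0) ∧
      ((Finset.univ.filter fun r => b r = 1).card ≠ 1 →
        ∀ A, InN b A → φ₁ A = 0) ∧
      IsDerN b φ₂ ∧
      (∀ A, InBlk b (t - 1) t A → InBlk b 1 (t - 1) (φ₂ A)) ∧
      (∀ i j, 1 ≤ i → i < j → j ≤ t → ¬(i = t - 1 ∧ j = t) →
        ∀ A, InBlk b i j A → φ₂ A = 0) ∧
      ((Finset.univ.filter fun s => b s = t).card ≠ 1 →
        ∀ A, InN b A → φ₂ A = 0) ∧
      IsDerN b ψ₁ ∧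
      (∀ A, InBlk b 1 2 A → InBlk b 3 t (ψ₁ A)) ∧
      (∀ A, InBlk b 1 3 A → InBlk b 2 t (ψ₁ A)) ∧
      (∀ i j, 1 ≤ i → i < j → j ≤ t → ¬(i = 1 ∧ j = 2) → ¬(i = 1 ∧ j = 3) →
        ∀ A, InBlk b i j A → ψ₁ A = 0) ∧
      ((Finset.univ.filter fun r => b r = 1).card ≠ 1 →
        ∀ A, InN b A → ψ₁ A = 0) ∧
      IsDerN b ψ₂ ∧
      (∀ A, InBlk b (t - 1) t A → InBlk b 1 (t - 2) (ψ₂ A)) ∧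
      (∀ A, InBlk b (t - 2) t A → InBlk b 1 (t - 1) (ψ₂ A)) ∧
      (∀ i j, 1 ≤ i → i < j → j ≤ t → ¬(i = t - 1 ∧ j = t) → ¬(i = t - 2 ∧ j = t) →
        ∀ A, InBlk b i j A → ψ₂ A = 0) ∧
      ((Finset.univ.filter fun s => b s = t).card ≠ 1 →
        ∀ A, InN b A → ψ₂ A = 0) ∧
      (∀ A, InN b A → f A = X * A - A * X + φ A + φ₁ A + φ₂ A + ψ₁ A + ψ₂ A) :=
  stmt18_general b ht hlb hub hsurj f hf
end

section
/- Let F be a field of characteristic 2 and let N be the Lie algebra of strictly upper triangular 4×4 matrices over F (with bracket [X,Y] = XY − YX). N has basis {E₁₂, E₁₃, E₁₄, E₂₃, E₂₄, E₃₄}, where E_{ij} is the matrix with entry 1 in position (i,j) and 0 elsewhere. The F-linear map f : N → N determined on this basis by f(E₁₂) = −E₃₄, f(E₁₃) = E₂₄, and f(E₁₄) = f(E₂₃) = f(E₂₄) = f(E₃₄) = 0 is a derivation of N, i.e. f([X,Y]) = [f(X),Y] + [X,f(Y)] for all X, Y ∈ N. -/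
/-!
Since `f X = -x₁₂ E₃₄ + x₁₃ E₂₄` only sees the first row, both sides of the derivation identity
are combinations of `E₁₄` and `E₂₄`, and a direct computation shows they agree on `E₂₄` while on
`E₁₄` they differ by `2 (x₁₂ y₁₃ - x₁₃ y₁₂) E₁₄`, which vanishes exactly in characteristic 2.
Indices are 0-based in the code: `single 2 3 1` is `E₃₄`.
-/

open Matrix

namespace Matrix

def IsStrictUpperTriangular {n R : Type*} [LinearOrder n] [Zero R] (X : Matrix n n R) : Prop :=
  ∀ r s, s ≤ r → X r s = 0

namespace IsStrictUpperTriangular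

theorem mul {n R : Type*} [LinearOrder n] [Fintype n] [NonUnitalNonAssocSemiring R]
    {X Y : Matrix n n R} (hX : X.IsStrictUpperTriangular) (hY : Y.IsStrictUpperTriangular) :
    (X * Y).IsStrictUpperTriangular := by
  intro r s hsr
  refine Finset.sum_eq_zero fun k _ => ?_
  rcases le_or_gt k r with hkr | hrk
  · simp only [hX r k hkr, zero_mul]
  · simp only [hY k s (hsr.trans hrk.le), mul_zero]

theorem lie {n R : Type*} [LinearOrder n] [Fintype n] [NonUnitalNonAssocRing R]
    {X Y : Matrix n n R} (hX : X.IsStrictUpperTriangular) (hY : Y.IsStrictUpperTriangular) :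
    (⁅X, Y⁆).IsStrictUpperTriangular := by
  intro r s hsr
  rw [Ring.lie_def, sub_apply, hX.mul hY r s hsr, hY.mul hX r s hsr, sub_zero]

variable {R : Type*} [CommRing R] {X Y : Matrix (Fin 4) (Fin 4) R}

theorem eq_sum_single (hX : X.IsStrictUpperTriangular) :
    X = X 0 1 • single 0 1 1 + X 0 2 • single 0 2 1 + X 0 3 • single 0 3 1
      + X 1 2 • single 1 2 1 + X 1 3 • single 1 3 1 + X 2 3 • single 2 3 1 := by
  ext i j
  fin_cases i <;> fin_cases j <;> simp (disch := decide) [single, hX _ _]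

theorem lie_single_two_three (hY : Y.IsStrictUpperTriangular) :
    ⁅Y, (single 2 3 1 : Matrix (Fin 4) (Fin 4) R)⁆ =
      Y 0 2 • single 0 3 1 + Y 1 2 • single 1 3 1 := by
  ext i j
  fin_cases i <;> fin_cases j <;>
    simp (disch := decide) [Ring.lie_def, mul_apply, single, hY _ _]

theorem lie_single_one_three (hY : Y.IsStrictUpperTriangular) :
    ⁅Y, (single 1 3 1 : Matrix (Fin 4) (Fin 4) R)⁆ = Y 0 1 • single 0 3 1 := by
  ext i j
  fin_cases i <;> fin_cases j <;>
    simp (disch := decide) [Ring.lie_def, mul_apply, single, hY _ _]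

theorem lie_apply_zero_one (hX : X.IsStrictUpperTriangular) (hY : Y.IsStrictUpperTriangular) :
    ⁅X, Y⁆ 0 1 = 0 := by
  simp (disch := decide) [Ring.lie_def, mul_apply, Fin.sum_univ_four, hX _ _, hY _ _]

theorem lie_apply_zero_two (hX : X.IsStrictUpperTriangular) (hY : Y.IsStrictUpperTriangular) :
    ⁅X, Y⁆ 0 2 = X 0 1 * Y 1 2 - Y 0 1 * X 1 2 := by
  simp (disch := decide) [Ring.lie_def, mul_apply, Fin.sum_univ_four, hX _ _, hY _ _]

section

attribute [local instance 100] LieRing.ofAssociativeRing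

theorem leibniz_lie_of_charP_two [CharP R 2] (hX : X.IsStrictUpperTriangular)
    (hY : Y.IsStrictUpperTriangular) (d : Matrix (Fin 4) (Fin 4) R → Matrix (Fin 4) (Fin 4) R)
    (hd : ∀ Z : Matrix (Fin 4) (Fin 4) R, Z.IsStrictUpperTriangular →
      d Z = -(Z 0 1 • single 2 3 1) + Z 0 2 • single 1 3 1) :
    d ⁅X, Y⁆ = ⁅d X, Y⁆ + ⁅X, d Y⁆ := by
  rw [hd _ (hX.lie hY), hd X hX, hd Y hY, hX.lie_apply_zero_one hY, hX.lie_apply_zero_two hY]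
  simp only [lie_add, add_lie, lie_neg, neg_lie, lie_smul, smul_lie,
    ← lie_skew (single 2 3 1 : Matrix (Fin 4) (Fin 4) R) Y,
    ← lie_skew (single 1 3 1 : Matrix (Fin 4) (Fin 4) R) Y,
    hX.lie_single_two_three, hY.lie_single_two_three, hX.lie_single_one_three,
    hY.lie_single_one_three]
  linear_combination (norm := module)
    CharTwo.two_eq_zero (R := R) •
      ((X 0 2 * Y 0 1 - X 0 1 * Y 0 2) • (single 0 3 1 : Matrix (Fin 4) (Fin 4) R))

end

end IsStrictUpperTriangular

end Matrix

/-- Example: let `char F = 2` and let `N` be the Lie algebra of strictly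
upper triangular `4×4` matrices over `F`. The linear map `f` determined on the basis
`{E₁₂, E₁₃, E₁₄, E₂₃, E₂₄, E₃₄}` by `f(E₁₂) = -E₃₄`, `f(E₁₃) = E₂₄`, and
`f(E₁₄) = f(E₂₃) = f(E₂₄) = f(E₃₄) = 0` is a derivation of `N`:
`f([X,Y]) = [f(X),Y] + [X,f(Y)]` for all `X, Y ∈ N`. -/
theorem stmt19 {F : Type*} [Field F] (hchar : ringChar F = 2)
    (f : Matrix (Fin 4) (Fin 4) F →ₗ[F] Matrix (Fin 4) (Fin 4) F)
    (hE12 : f (Matrix.single 0 1 (1 : F)) = -(Matrix.single 2 3 (1 : F)))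
    (hE13 : f (Matrix.single 0 2 (1 : F)) = Matrix.single 1 3 (1 : F))
    (hE14 : f (Matrix.single 0 3 (1 : F)) = 0)
    (hE23 : f (Matrix.single 1 2 (1 : F)) = 0)
    (hE24 : f (Matrix.single 1 3 (1 : F)) = 0)
    (hE34 : f (Matrix.single 2 3 (1 : F)) = 0) :
    ∀ X Y : Matrix (Fin 4) (Fin 4) F,
      (∀ r s : Fin 4, s ≤ r → X r s = 0) → (∀ r s : Fin 4, s ≤ r → Y r s = 0) →
      f (X * Y - Y * X) = (f X * Y - Y * f X) + (X * f Y - f Y * X) := by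
  have : CharP F 2 := ringChar.eq_iff.mp hchar
  have hf (Z : Matrix (Fin 4) (Fin 4) F) (hZ : Z.IsStrictUpperTriangular) :
      f Z = -(Z 0 1 • single 2 3 1) + Z 0 2 • single 1 3 1 := by
    conv_lhs => rw [hZ.eq_sum_single]
    simp only [map_add, map_smul, hE12, hE13, hE14, hE23, hE24, hE34, smul_neg, smul_zero,
      add_zero]
  intro X Y hX hY
  exact IsStrictUpperTriangular.leibniz_lie_of_charP_two hX hY f hf
end
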